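/- arXiv:1105.3538 — 3 statements merged into one kernel-verified Lean document; each statement's English description precedes it below -/
import Mathlib

section
/- (The crossover heuristic in the Walsh basis.) Let x ∈ Λ, let χ be a crossover-mask distribution, let y = C(x), and let ŷ = Wy. Then for every k ∈ Ω, ŷ_k = √n · Σ_{m ∈ Ω} ((χ_m + χ_{m̄})/2) · x̂_{k⊗m} · x̂_{k⊗m̄}, where x̂ = Wx. -/
open Finset

noncomputable section

/-- `#u`: the number of one-bits of `u` (sum of binary digits). -/
def pc (u : ℕ) : ℕ := (Nat.digits 2 u).sum

/-- `ū`: the bitwise complement of `u` within `ℓ` bits. -/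
def cpl (ℓ u : ℕ) : ℕ := u ^^^ (2 ^ ℓ - 1)

/-- `Ω_u`: the set of `v < 2^ℓ` with `v ⊗ u = v`. -/
def omg (ℓ u : ℕ) : Finset ℕ := (Finset.range (2 ^ ℓ)).filter (fun v => v &&& u = v)

/-- `I(u)`: the set of indices `i < ℓ` where bit `i` of `u` is one. -/
def idx (ℓ u : ℕ) : Finset ℕ := (Finset.range ℓ).filter (fun i => u.testBit i)

/-- The schema average `x_k^{(u)} = Σ_{i ∈ Ω_{ū}} x_{i ⊕ k}`. -/
def schAvg (ℓ : ℕ) (x : ℕ → ℝ) (u k : ℕ) : ℝ := ∑ i ∈ omg ℓ (cpl ℓ u), x (i ^^^ k)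

/-- The Walsh transform `x̂ = W x`, with `W_{i,j} = n^{-1/2} (-1)^{i^T j}`. -/
def walsh (ℓ : ℕ) (x : ℕ → ℝ) (k : ℕ) : ℝ :=
  (Real.sqrt (2 ^ ℓ))⁻¹ * ∑ j ∈ Finset.range (2 ^ ℓ), (-1 : ℝ) ^ pc (k &&& j) * x j

/-- Proportional selection `F(x)_k = f_k x_k / Σ_j f_j x_j`. -/
def propSel (ℓ : ℕ) (f x : ℕ → ℝ) (k : ℕ) : ℝ :=
  f k * x k / ∑ j ∈ Finset.range (2 ^ ℓ), f j * x j

/-- The crossover heuristic for a crossover-mask distribution `χ`. -/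
def crossH (ℓ : ℕ) (χ : ℕ → ℝ) (x : ℕ → ℝ) (k : ℕ) : ℝ :=
  ∑ i ∈ Finset.range (2 ^ ℓ), ∑ j ∈ Finset.range (2 ^ ℓ), x i * x j *
    ∑ m ∈ Finset.range (2 ^ ℓ), ((χ m + χ (cpl ℓ m)) / 2) *
      (if (i &&& m) ^^^ (j &&& cpl ℓ m) = k then (1 : ℝ) else 0)

/-- The mutation heuristic for a mutation-mask distribution `μ`. -/
def mutH (ℓ : ℕ) (μ : ℕ → ℝ) (x : ℕ → ℝ) (k : ℕ) : ℝ :=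
  ∑ j ∈ Finset.range (2 ^ ℓ), μ (j ^^^ k) * x j

/-- Mask distribution of independent bitwise mutation with rates `p i`:
`μ_m = ∏_i p_i^{m_i} (1-p_i)^{1-m_i}` (with `0^0 = 1`). -/
def mutDist (ℓ : ℕ) (p : ℕ → ℝ) (m : ℕ) : ℝ :=
  ∏ i ∈ Finset.range ℓ, (if m.testBit i then p i else 1 - p i)

/-- Mask distribution of one-point crossover with crossover rate `c` (for `ℓ ≥ 2`). -/
def onePoint (ℓ : ℕ) (c : ℝ) (m : ℕ) : ℝ :=
  if m = 0 then 1 - c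
  else if ∃ i ∈ Finset.Ico 1 ℓ, m = 2 ^ i - 1 then c / ((ℓ : ℝ) - 1)
  else 0

/-- `hi(u)`: index of the highest one-bit of `u` (`hi 0 = 0`). -/
def hiBit (u : ℕ) : ℕ := Nat.log2 u

/-- `lo(u)`: index of the lowest one-bit of `u` (`lo 0 = ℓ - 1`). -/
def loBit (ℓ u : ℕ) : ℕ := if u = 0 then ℓ - 1 else padicValNat 2 u

/-- The defining length `L(u) = hi(u) - lo(u)`. -/
def defLen (ℓ u : ℕ) : ℕ := hiBit u - loBit ℓ u


/-!
The Walsh character `j ↦ (-1)^{#(k ⊗ j)}` turns `⊕` into multiplication, and a child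
`(i ⊗ m) ⊕ (j ⊗ m̄)` is the `⊕` of a piece of each parent, so its character at `k` factors as
the character at `k ⊗ m` of `i` times the character at `k ⊗ m̄` of `j`. Summing over the two
parents then turns the Walsh transform of `C(x)` into a mask average of products of Walsh
transforms of `x`; the two normalising factors `n^{-1/2}` leave the `√n`.
-/

def walshSum (ℓ : ℕ) (x : ℕ → ℝ) (k : ℕ) : ℝ :=
  ∑ j ∈ range (2 ^ ℓ), (-1 : ℝ) ^ pc (k &&& j) * x j

lemma walsh_eq_inv_sqrt_mul_walshSum (ℓ : ℕ) (x : ℕ → ℝ) (k : ℕ) :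
    walsh ℓ x k = (Real.sqrt (2 ^ ℓ))⁻¹ * walshSum ℓ x k :=
  rfl

lemma pc_eq_mod_two_add_pc_div_two (u : ℕ) : pc u = u % 2 + pc (u / 2) := by
  rcases Nat.eq_zero_or_pos u with rfl | hu
  · simp [pc]
  · rw [pc, Nat.digits_def' one_lt_two hu, List.sum_cons, pc]

lemma neg_one_pow_pc_xor (a b : ℕ) :
    (-1 : ℝ) ^ pc (a ^^^ b) = (-1) ^ pc a * (-1) ^ pc b := by
  induction a using Nat.strong_induction_on generalizing b with
  | _ a ih =>
    rcases Nat.eq_zero_or_pos a with rfl | ha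
    · simp [pc]
    · rw [pc_eq_mod_two_add_pc_div_two (a ^^^ b), pc_eq_mod_two_add_pc_div_two a,
        pc_eq_mod_two_add_pc_div_two b, Nat.xor_div_two, Nat.xor_mod_two_eq, pow_add,
        ih (a / 2) (Nat.div_lt_self ha one_lt_two), ← neg_one_pow_eq_pow_mod_two, pow_add,
        pow_add, pow_add, ← neg_one_pow_eq_pow_mod_two, ← neg_one_pow_eq_pow_mod_two]
      ring

lemma neg_one_pow_pc_and_crossover (k i j m c : ℕ) :
    (-1 : ℝ) ^ pc (k &&& ((i &&& m) ^^^ (j &&& c))) =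
      (-1) ^ pc ((k &&& m) &&& i) * (-1) ^ pc ((k &&& c) &&& j) := by
  rw [Nat.and_xor_distrib_left, neg_one_pow_pc_xor, Nat.and_comm i, Nat.and_comm j,
    ← Nat.and_assoc, ← Nat.and_assoc]

lemma cpl_lt_two_pow {ℓ m : ℕ} (hm : m < 2 ^ ℓ) : cpl ℓ m < 2 ^ ℓ :=
  Nat.xor_lt_two_pow hm (Nat.sub_lt (Nat.two_pow_pos ℓ) one_pos)

lemma crossover_child_lt_two_pow {ℓ m : ℕ} (i j : ℕ) (hm : m < 2 ^ ℓ) :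
    (i &&& m) ^^^ (j &&& cpl ℓ m) < 2 ^ ℓ :=
  Nat.xor_lt_two_pow (Nat.and_lt_two_pow i hm) (Nat.and_lt_two_pow j (cpl_lt_two_pow hm))

lemma walshSum_crossH (ℓ : ℕ) (χ x : ℕ → ℝ) (k : ℕ) :
    walshSum ℓ (crossH ℓ χ x) k =
      ∑ m ∈ range (2 ^ ℓ), ((χ m + χ (cpl ℓ m)) / 2) *
        walshSum ℓ x (k &&& m) * walshSum ℓ x (k &&& cpl ℓ m) := by
  set c : ℕ → ℝ := fun m => (χ m + χ (cpl ℓ m)) / 2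
  calc walshSum ℓ (crossH ℓ χ x) k
      = ∑ i ∈ range (2 ^ ℓ), ∑ j ∈ range (2 ^ ℓ), ∑ m ∈ range (2 ^ ℓ),
          x i * x j * c m * (-1 : ℝ) ^ pc (k &&& ((i &&& m) ^^^ (j &&& cpl ℓ m))) := by
        simp only [walshSum, crossH, mul_sum]
        rw [sum_comm]
        refine sum_congr rfl fun i _ => ?_
        rw [sum_comm]
        refine sum_congr rfl fun j _ => ?_
        rw [sum_comm]
        refine sum_congr rfl fun m hm => ?_
        simp only [mul_ite, mul_one, mul_zero, sum_ite_eq,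
          mem_range.mpr (crossover_child_lt_two_pow i j (mem_range.mp hm)), if_true]
        ring
    _ = ∑ m ∈ range (2 ^ ℓ), ∑ i ∈ range (2 ^ ℓ), ∑ j ∈ range (2 ^ ℓ),
          c m * ((-1 : ℝ) ^ pc ((k &&& m) &&& i) * x i) *
            ((-1 : ℝ) ^ pc ((k &&& cpl ℓ m) &&& j) * x j) := by
        conv_rhs => rw [sum_comm]; enter [2, i]; rw [sum_comm]
        refine sum_congr rfl fun i _ => sum_congr rfl fun j _ => sum_congr rfl fun m _ => ?_
        rw [neg_one_pow_pc_and_crossover]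
        ring
    _ = ∑ m ∈ range (2 ^ ℓ), c m * walshSum ℓ x (k &&& m) * walshSum ℓ x (k &&& cpl ℓ m) := by
        simp only [walshSum, mul_sum, sum_mul]
        exact sum_congr rfl fun m _ => sum_comm

theorem crossover_heuristic_walsh_general
    (ℓ : ℕ) (x χ : ℕ → ℝ)
    (k : ℕ) :
    walsh ℓ (crossH ℓ χ x) k =
      Real.sqrt (2 ^ ℓ) *
        ∑ m ∈ Finset.range (2 ^ ℓ), ((χ m + χ (cpl ℓ m)) / 2) *
          walsh ℓ x (k &&& m) * walsh ℓ x (k &&& cpl ℓ m) := by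
  simp only [walsh_eq_inv_sqrt_mul_walshSum, walshSum_crossH, mul_sum]
  refine sum_congr rfl fun m _ => ?_
  field_simp

/-- **The crossover heuristic in the Walsh basis.**  For `x ∈ Λ`, a crossover-mask
distribution `χ`, `y = C(x)` and `ŷ = W y`:
`ŷ_k = √n Σ_m ((χ_m + χ_{m̄})/2) x̂_{k⊗m} x̂_{k⊗m̄}`. -/
theorem crossover_heuristic_walsh
    (ℓ : ℕ) (hℓ : 1 ≤ ℓ) (x χ : ℕ → ℝ)
    (hx0 : ∀ i ∈ Finset.range (2 ^ ℓ), 0 ≤ x i)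
    (hx1 : ∑ i ∈ Finset.range (2 ^ ℓ), x i = 1)
    (hχ0 : ∀ m ∈ Finset.range (2 ^ ℓ), 0 ≤ χ m)
    (hχ1 : ∑ m ∈ Finset.range (2 ^ ℓ), χ m = 1)
    (k : ℕ) (hk : k < 2 ^ ℓ) :
    walsh ℓ (crossH ℓ χ x) k =
      Real.sqrt (2 ^ ℓ) *
        ∑ m ∈ Finset.range (2 ^ ℓ), ((χ m + χ (cpl ℓ m)) / 2) *
          walsh ℓ x (k &&& m) * walsh ℓ x (k &&& cpl ℓ m) :=
  crossover_heuristic_walsh_general ℓ x χ k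
end
end

section
/- (Exact schema theorem for crossover.) Let x ∈ Λ, let χ be a crossover-mask distribution, and let y = C(x). Then for every u ∈ Ω and every k ∈ Ω_u, y_k^{(u)} = Σ_{m ∈ Ω} ((χ_m + χ_{m̄})/2) · x_{k⊗m}^{(u⊗m)} · x_{k⊗m̄}^{(u⊗m̄)}. -/
open Finset

noncomputable section

/-!
A schema average `x_k^{(u)}` is the total mass of the strings `w` with `w ⊗ u = k`. Expanding `C`,
the child `(i ⊗ m) ⊕ (j ⊗ m̄)` of parents `i`, `j` under the mask `m` lies in that schema exactly
when `i` agrees with `k` on the positions of `u ⊗ m` and `j` agrees with `k` on those of `u ⊗ m̄`.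
So for each mask the double sum over the parents factors into the product of the two schema
averages of `x`.
-/

namespace Nat

theorem testBit_eq_false_of_lt_two_pow_of_le {n ℓ t : ℕ} (hn : n < 2 ^ ℓ) (ht : ℓ ≤ t) :
    n.testBit t = false :=
  testBit_lt_two_pow (hn.trans_le (Nat.pow_le_pow_right two_pos ht))

end Nat

theorem testBit_cpl (ℓ m t : ℕ) : (cpl ℓ m).testBit t = (m.testBit t ^^ decide (t < ℓ)) := by
  rw [cpl, Nat.testBit_xor, Nat.testBit_two_pow_sub_one]

theorem mem_omg {ℓ u v : ℕ} : v ∈ omg ℓ u ↔ v < 2 ^ ℓ ∧ v &&& u = v := by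
  rw [omg, mem_filter, mem_range]

theorem mem_omg_cpl {ℓ u v : ℕ} : v ∈ omg ℓ (cpl ℓ u) ↔ v < 2 ^ ℓ ∧ v &&& u = 0 := by
  rw [mem_omg]
  refine and_congr_right fun hv => ?_
  simp only [Nat.eq_iff_testBit_eq (n := v &&& _), Nat.testBit_and, testBit_cpl, Nat.zero_testBit]
  refine forall_congr' fun t => ?_
  rcases lt_or_ge t ℓ with ht | ht
  · cases v.testBit t <;> cases u.testBit t <;> simp [ht]
  · simp [Nat.testBit_eq_false_of_lt_two_pow_of_le hv ht]

theorem schAvg_eq_sum_filter (x : ℕ → ℝ) {ℓ v w : ℕ} (hw : w < 2 ^ ℓ) (hwv : w &&& v = w) :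
    schAvg ℓ x v w = ∑ i ∈ range (2 ^ ℓ) with i &&& v = w, x i := by
  refine sum_nbij' (· ^^^ w) (· ^^^ w) (fun a ha => ?_) (fun b hb => ?_)
    (fun a _ => Nat.xor_xor_cancel_right a w) (fun b _ => Nat.xor_xor_cancel_right b w)
    (fun _ _ => rfl)
  · rw [mem_omg_cpl] at ha
    rw [mem_filter, mem_range, Nat.and_xor_distrib_right, ha.2, hwv, Nat.zero_xor]
    exact ⟨Nat.xor_lt_two_pow ha.1 hw, rfl⟩
  · rw [mem_filter, mem_range] at hb
    rw [mem_omg_cpl, Nat.and_xor_distrib_right, hb.2, hwv, Nat.xor_self]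
    exact ⟨Nat.xor_lt_two_pow hb.1 hw, rfl⟩

def child (ℓ m i j : ℕ) : ℕ := (i &&& m) ^^^ (j &&& cpl ℓ m)

theorem child_lt_two_pow {ℓ i j : ℕ} (m : ℕ) (hi : i < 2 ^ ℓ) (hj : j < 2 ^ ℓ) :
    child ℓ m i j < 2 ^ ℓ :=
  Nat.xor_lt_two_pow (Nat.and_le_left.trans_lt hi) (Nat.and_le_left.trans_lt hj)

theorem eq_iff_and_eq_and_and_cpl_eq {ℓ a b : ℕ} (m : ℕ) (ha : a < 2 ^ ℓ) (hb : b < 2 ^ ℓ) :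
    a = b ↔ a &&& m = b &&& m ∧ a &&& cpl ℓ m = b &&& cpl ℓ m := by
  refine ⟨fun h => h ▸ ⟨rfl, rfl⟩, fun ⟨h, h'⟩ => Nat.eq_of_testBit_eq fun t => ?_⟩
  have h := congrArg (Nat.testBit · t) h
  have h' := congrArg (Nat.testBit · t) h'
  rcases lt_or_ge t ℓ with ht | ht
  · cases hm : m.testBit t
    · simpa [Nat.testBit_and, testBit_cpl, hm, ht] using h'
    · simpa [Nat.testBit_and, hm] using h
  · simp [Nat.testBit_eq_false_of_lt_two_pow_of_le ha ht,
      Nat.testBit_eq_false_of_lt_two_pow_of_le hb ht]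

theorem child_and_and {ℓ u : ℕ} (m i j : ℕ) (hu : u < 2 ^ ℓ) :
    child ℓ m i j &&& u &&& m = i &&& (u &&& m) := by
  refine Nat.eq_of_testBit_eq fun t => ?_
  rcases lt_or_ge t ℓ with ht | ht
  · simp only [child, Nat.testBit_and, Nat.testBit_xor, testBit_cpl, ht, decide_true]
    cases i.testBit t <;> cases j.testBit t <;> cases u.testBit t <;> cases m.testBit t <;> rfl
  · simp [Nat.testBit_and, Nat.testBit_eq_false_of_lt_two_pow_of_le hu ht]

theorem child_and_and_cpl {ℓ u : ℕ} (m i j : ℕ) (hu : u < 2 ^ ℓ) :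
    child ℓ m i j &&& u &&& cpl ℓ m = j &&& (u &&& cpl ℓ m) := by
  refine Nat.eq_of_testBit_eq fun t => ?_
  rcases lt_or_ge t ℓ with ht | ht
  · simp only [child, Nat.testBit_and, Nat.testBit_xor, testBit_cpl, ht, decide_true]
    cases i.testBit t <;> cases j.testBit t <;> cases u.testBit t <;> cases m.testBit t <;> rfl
  · simp [Nat.testBit_and, Nat.testBit_eq_false_of_lt_two_pow_of_le hu ht]

theorem child_and_eq_iff {ℓ u k : ℕ} (m i j : ℕ) (hu : u < 2 ^ ℓ) (hk : k < 2 ^ ℓ) :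
    child ℓ m i j &&& u = k ↔
      i &&& (u &&& m) = k &&& m ∧ j &&& (u &&& cpl ℓ m) = k &&& cpl ℓ m := by
  rw [eq_iff_and_eq_and_and_cpl_eq m (Nat.and_lt_two_pow _ hu) hk, child_and_and m i j hu,
    child_and_and_cpl m i j hu]

theorem and_and_and_of_and_eq {k u : ℕ} (m : ℕ) (h : k &&& u = k) :
    k &&& m &&& (u &&& m) = k &&& m :=
  calc k &&& m &&& (u &&& m) = k &&& u &&& (m &&& m) := by ac_rfl
    _ = k &&& m := by rw [h, Nat.and_self]

theorem Finset.sum_filter_mul_sum_filter {ι κ R : Type*} [NonUnitalNonAssocSemiring R]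
    (s : Finset ι) (t : Finset κ) (p : ι → Prop) (q : κ → Prop) [DecidablePred p]
    [DecidablePred q] (f : ι → R) (g : κ → R) :
    (∑ i ∈ s with p i, f i) * ∑ j ∈ t with q j, g j =
      ∑ i ∈ s, ∑ j ∈ t, if p i ∧ q j then f i * g j else 0 := by
  simp only [sum_filter, sum_mul_sum, ite_zero_mul_ite_zero]

theorem sum_filter_crossH (ℓ : ℕ) (χ x : ℕ → ℝ) (p : ℕ → Prop) [DecidablePred p] :
    ∑ w ∈ range (2 ^ ℓ) with p w, crossH ℓ χ x w =
      ∑ m ∈ range (2 ^ ℓ), (χ m + χ (cpl ℓ m)) / 2 * ∑ i ∈ range (2 ^ ℓ), ∑ j ∈ range (2 ^ ℓ),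
        if p (child ℓ m i j) then x i * x j else 0 := by
  simp only [mul_sum]
  calc _ = ∑ i ∈ range (2 ^ ℓ), ∑ j ∈ range (2 ^ ℓ), ∑ m ∈ range (2 ^ ℓ),
          ∑ w ∈ range (2 ^ ℓ) with p w, (χ m + χ (cpl ℓ m)) / 2 *
            if child ℓ m i j = w then x i * x j else 0 := by
        simp only [crossH, child]
        rw [sum_comm]
        refine sum_congr rfl fun i _ => ?_
        rw [sum_comm]
        refine sum_congr rfl fun j _ => ?_
        simp only [mul_sum]
        rw [sum_comm]
        exact sum_congr rfl fun m _ => sum_congr rfl fun w _ => by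
          by_cases h : (i &&& m) ^^^ (j &&& cpl ℓ m) = w <;> simp [h, mul_comm]
    _ = ∑ i ∈ range (2 ^ ℓ), ∑ j ∈ range (2 ^ ℓ), ∑ m ∈ range (2 ^ ℓ),
          (χ m + χ (cpl ℓ m)) / 2 *
            if p (child ℓ m i j) then x i * x j else 0 := by
        refine sum_congr rfl fun i hi => sum_congr rfl fun j hj => sum_congr rfl fun m _ => ?_
        rw [← mul_sum, sum_ite_eq]
        simp only [mem_filter, mem_range, child_lt_two_pow m (mem_range.mp hi) (mem_range.mp hj),
          true_and]
    _ = _ := (sum_congr rfl fun _ _ => sum_comm).trans sum_comm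

theorem exact_schema_theorem_for_crossover_general
    (ℓ : ℕ) (x χ : ℕ → ℝ)
    (u : ℕ) (hu : u < 2 ^ ℓ) (k : ℕ) (hk : k ∈ omg ℓ u) :
    schAvg ℓ (crossH ℓ χ x) u k =
      ∑ m ∈ Finset.range (2 ^ ℓ), ((χ m + χ (cpl ℓ m)) / 2) *
        schAvg ℓ x (u &&& m) (k &&& m) *
        schAvg ℓ x (u &&& cpl ℓ m) (k &&& cpl ℓ m) := by
  obtain ⟨hk_lt, hku⟩ := mem_omg.mp hk
  rw [schAvg_eq_sum_filter _ hk_lt hku, sum_filter_crossH]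
  refine sum_congr rfl fun m _ => ?_
  rw [schAvg_eq_sum_filter _ (Nat.and_le_left.trans_lt hk_lt) (and_and_and_of_and_eq m hku),
    schAvg_eq_sum_filter _ (Nat.and_le_left.trans_lt hk_lt) (and_and_and_of_and_eq _ hku), mul_assoc,
    sum_filter_mul_sum_filter]
  simp only [child_and_eq_iff m _ _ hu hk_lt]

/-- **Exact schema theorem for crossover.**  For `x ∈ Λ`, a crossover-mask distribution
`χ`, `y = C(x)`, `u ∈ Ω` and `k ∈ Ω_u`:
`y_k^{(u)} = Σ_m ((χ_m + χ_{m̄})/2) x_{k⊗m}^{(u⊗m)} x_{k⊗m̄}^{(u⊗m̄)}`. -/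
theorem exact_schema_theorem_for_crossover
    (ℓ : ℕ) (hℓ : 1 ≤ ℓ) (x χ : ℕ → ℝ)
    (hx0 : ∀ i ∈ Finset.range (2 ^ ℓ), 0 ≤ x i)
    (hx1 : ∑ i ∈ Finset.range (2 ^ ℓ), x i = 1)
    (hχ0 : ∀ m ∈ Finset.range (2 ^ ℓ), 0 ≤ χ m)
    (hχ1 : ∑ m ∈ Finset.range (2 ^ ℓ), χ m = 1)
    (u : ℕ) (hu : u < 2 ^ ℓ) (k : ℕ) (hk : k ∈ omg ℓ u) :
    schAvg ℓ (crossH ℓ χ x) u k =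
      ∑ m ∈ Finset.range (2 ^ ℓ), ((χ m + χ (cpl ℓ m)) / 2) *
        schAvg ℓ x (u &&& m) (k &&& m) *
        schAvg ℓ x (u &&& cpl ℓ m) (k &&& cpl ℓ m) :=
  exact_schema_theorem_for_crossover_general ℓ x χ u hu k hk
end
end

section
/- (Approximate schema theorem for mutation.) Let x ∈ Λ, let p ∈ [0,1], let U be the mutation heuristic for independent bitwise mutation with all rates p_i = p, and let y = U(x). Then for every u ∈ Ω and every k ∈ Ω_u, y_k^{(u)} ≥ (1 − p)^{#u} · x_k^{(u)}. -/
open Finset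

noncomputable section

/-! A string `i ^^^ k` of the schema `(u, k)` is mutated by the mask `m` into the schema iff `m`
flips none of the fixed bits `u`, i.e. `m ∈ Ω_ū`; since `Ω_ū` is closed under `^^^`, each such
string keeps the full mass `∑_{m ∈ Ω_ū} μ_m` inside the schema, while strings outside it can only
add nonnegative mass. For independent bitwise mutation this mass factorizes over the bits into
`∏_{t < ℓ} (if u_t then 1 - p_t else 1)`, which is `(1 - p)^{#u}` for constant rates. -/

theorem sum_range_two_pow_prod_testBit {R : Type*} [CommSemiring R] (G : ℕ → Bool → R) (ℓ : ℕ) :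
    ∑ m ∈ range (2 ^ ℓ), ∏ t ∈ range ℓ, G t (m.testBit t) =
      ∏ t ∈ range ℓ, (G t true + G t false) := by
  induction ℓ with
  | zero => simp
  | succ n ih =>
    have low : ∀ m ∈ range (2 ^ n), ∏ t ∈ range (n + 1), G t (m.testBit t) =
        (∏ t ∈ range n, G t (m.testBit t)) * G n false := fun m hm => by
      rw [prod_range_succ, Nat.testBit_lt_two_pow (mem_range.1 hm)]
    have high : ∀ m ∈ range (2 ^ n), ∏ t ∈ range (n + 1), G t ((2 ^ n + m).testBit t) =
        (∏ t ∈ range n, G t (m.testBit t)) * G n true := fun m hm => by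
      rw [prod_range_succ, Nat.testBit_two_pow_add_eq, Nat.testBit_lt_two_pow (mem_range.1 hm),
        Bool.not_false]
      congr 1
      exact prod_congr rfl fun t ht => by rw [Nat.testBit_two_pow_add_gt (mem_range.1 ht)]
    rw [pow_succ, mul_two, sum_range_add, sum_congr rfl low, sum_congr rfl high, ← sum_mul,
      ← sum_mul, ih, prod_range_succ, mul_add, add_comm]

theorem pc_eq_card_testBit {ℓ u : ℕ} (hu : u < 2 ^ ℓ) :
    pc u = #{t ∈ range ℓ | u.testBit t} := by
  induction ℓ generalizing u with
  | zero => simp [Nat.lt_one_iff.1 hu, pc]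
  | succ n ih =>
    have pc_eq : pc u = u % 2 + pc (u / 2) := by
      rcases Nat.eq_zero_or_pos u with rfl | hpos
      · simp [pc]
      · simp [pc, Nat.digits_def' one_lt_two hpos]
    rw [pc_eq, ih (by omega), card_filter, card_filter, sum_range_succ']
    rcases Nat.mod_two_eq_zero_or_one u with h | h <;> simp [Nat.testBit_succ, h, add_comm]

theorem testBit_cpl_s17 {ℓ t : ℕ} (u : ℕ) (ht : t < ℓ) : (cpl ℓ u).testBit t = !u.testBit t := by
  simp [cpl, ht]

theorem Nat.and_eq_left_iff_of_lt_two_pow {ℓ m w : ℕ} (hm : m < 2 ^ ℓ) :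
    m &&& w = m ↔ ∀ t ∈ range ℓ, m.testBit t → w.testBit t := by
  refine ⟨fun h t _ hmt => ?_, fun h => Nat.eq_of_testBit_eq fun t => ?_⟩
  · rw [← h, Nat.testBit_and] at hmt
    exact (Bool.and_eq_true_iff.1 hmt).2
  · rw [Nat.testBit_and]
    by_cases ht : t < ℓ
    · cases hmt : m.testBit t
      · rfl
      · simp [h t (mem_range.2 ht) hmt]
    · simp [Nat.testBit_lt_two_pow (hm.trans_le (Nat.pow_le_pow_right two_pos (not_lt.1 ht)))]

theorem xor_mem_omg {ℓ w a b : ℕ} (ha : a ∈ omg ℓ w) (hb : b ∈ omg ℓ w) : a ^^^ b ∈ omg ℓ w := by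
  simp only [omg, mem_filter, mem_range] at ha hb ⊢
  exact ⟨Nat.xor_lt_two_pow ha.1 hb.1, by rw [Nat.and_xor_distrib_right, ha.2, hb.2]⟩

theorem sum_omg_xor_left {M : Type*} [AddCommMonoid M] {ℓ w a : ℕ} (ha : a ∈ omg ℓ w)
    (f : ℕ → M) :
    ∑ i ∈ omg ℓ w, f (a ^^^ i) = ∑ i ∈ omg ℓ w, f i :=
  sum_equiv (Equiv.xor a) (fun i => ⟨xor_mem_omg ha, fun h => by simpa using xor_mem_omg ha h⟩)
    fun _ _ => rfl

theorem sum_omg_mutDist (ℓ w : ℕ) (p : ℕ → ℝ) :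
    ∑ m ∈ omg ℓ w, mutDist ℓ p m = ∏ t ∈ range ℓ, if w.testBit t then 1 else 1 - p t := by
  -- the factor of bit `t` vanishes when `t` is set in `m` but not in `w`, cutting `range` to `omg`
  let G : ℕ → Bool → ℝ := fun t b => if b → w.testBit t then (if b then p t else 1 - p t) else 0
  calc ∑ m ∈ omg ℓ w, mutDist ℓ p m
      = ∑ m ∈ range (2 ^ ℓ), ∏ t ∈ range ℓ, G t (m.testBit t) := by
        rw [omg, sum_filter]
        refine sum_congr rfl fun m hm => ?_
        simp only [G, prod_ite_zero, mutDist, Nat.and_eq_left_iff_of_lt_two_pow (mem_range.1 hm)]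
    _ = ∏ t ∈ range ℓ, if w.testBit t then 1 else 1 - p t := by
        rw [sum_range_two_pow_prod_testBit]
        refine prod_congr rfl fun t _ => ?_
        cases h : w.testBit t <;> simp [G, h]

theorem sum_omg_cpl_mutDist_const {ℓ u : ℕ} (hu : u < 2 ^ ℓ) (p : ℝ) :
    ∑ m ∈ omg ℓ (cpl ℓ u), mutDist ℓ (fun _ => p) m = (1 - p) ^ pc u := by
  rw [sum_omg_mutDist, pc_eq_card_testBit hu, ← prod_const, prod_filter]
  refine prod_congr rfl fun t ht => ?_
  cases h : u.testBit t <;> simp [testBit_cpl_s17 u (mem_range.1 ht), h]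

theorem mutDist_nonneg {ℓ : ℕ} {p : ℕ → ℝ} (hp : ∀ t ∈ range ℓ, p t ∈ Set.Icc 0 1) (m : ℕ) :
    0 ≤ mutDist ℓ p m :=
  prod_nonneg fun t ht => by
    obtain ⟨h0, h1⟩ := hp t ht
    split <;> linarith

theorem sum_omg_mul_schAvg_le_schAvg_mutH {ℓ : ℕ} {μ x : ℕ → ℝ} (hμ : ∀ m, 0 ≤ μ m)
    (hx : ∀ i ∈ range (2 ^ ℓ), 0 ≤ x i) (u : ℕ) {k : ℕ} (hk : k < 2 ^ ℓ) :
    (∑ m ∈ omg ℓ (cpl ℓ u), μ m) * schAvg ℓ x u k ≤ schAvg ℓ (mutH ℓ μ x) u k := by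
  set Ω := omg ℓ (cpl ℓ u)
  let e : ℕ ↪ ℕ := ⟨(· ^^^ k), (xor_left_involutive k).injective⟩
  have weight_eq : ∀ i ∈ Ω, ∑ i' ∈ Ω, μ ((i ^^^ k) ^^^ (i' ^^^ k)) = ∑ m ∈ Ω, μ m :=
    fun i hi => by
      have cancel_k : ∀ i', (i ^^^ k) ^^^ (i' ^^^ k) = i ^^^ i' := fun i' => by
        rw [xor_comm i' k, ← xor_assoc, xor_cancel_right]
      simp_rw [cancel_k]
      exact sum_omg_xor_left hi μ
  have map_subset : Ω.map e ⊆ range (2 ^ ℓ) := by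
    simp only [subset_iff, mem_map, mem_range]
    rintro _ ⟨i, hi, rfl⟩
    exact Nat.xor_lt_two_pow (mem_range.1 (mem_filter.1 hi).1) hk
  calc (∑ m ∈ Ω, μ m) * schAvg ℓ x u k
      = ∑ i ∈ Ω, (∑ i' ∈ Ω, μ ((i ^^^ k) ^^^ (i' ^^^ k))) * x (i ^^^ k) := by
        rw [schAvg, mul_sum]
        exact sum_congr rfl fun i hi => by rw [weight_eq i hi]
    _ = ∑ j ∈ Ω.map e, (∑ i' ∈ Ω, μ (j ^^^ (i' ^^^ k))) * x j := by
        rw [sum_map]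
        rfl
    _ ≤ ∑ j ∈ range (2 ^ ℓ), (∑ i' ∈ Ω, μ (j ^^^ (i' ^^^ k))) * x j :=
        sum_le_sum_of_subset_of_nonneg map_subset fun j hj _ =>
          mul_nonneg (sum_nonneg fun _ _ => hμ _) (hx j hj)
    _ = schAvg ℓ (mutH ℓ μ x) u k := by
        simp only [schAvg, mutH, sum_mul]
        exact sum_comm

theorem approximate_schema_theorem_for_mutation_general
    (ℓ : ℕ) (x : ℕ → ℝ)
    (hx0 : ∀ i ∈ Finset.range (2 ^ ℓ), 0 ≤ x i)
    (p : ℝ) (hp : p ∈ Set.Icc (0 : ℝ) 1)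
    (u : ℕ) (hu : u < 2 ^ ℓ) (k : ℕ) (hk : k ∈ omg ℓ u) :
    schAvg ℓ (mutH ℓ (mutDist ℓ (fun _ => p)) x) u k ≥
      (1 - p) ^ pc u * schAvg ℓ x u k := by
  have hk_lt : k < 2 ^ ℓ := mem_range.1 (mem_filter.1 hk).1
  rw [ge_iff_le, ← sum_omg_cpl_mutDist_const hu p]
  exact sum_omg_mul_schAvg_le_schAvg_mutH (mutDist_nonneg fun _ _ => hp) hx0 u hk_lt

/-- **Approximate schema theorem for mutation.**  For `x ∈ Λ`, `p ∈ [0,1]`, and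
`y = U(x)` for independent bitwise mutation with all rates equal to `p`:
for every `u ∈ Ω` and `k ∈ Ω_u`, `y_k^{(u)} ≥ (1-p)^{#u} x_k^{(u)}`. -/
theorem approximate_schema_theorem_for_mutation
    (ℓ : ℕ) (hℓ : 1 ≤ ℓ) (x : ℕ → ℝ)
    (hx0 : ∀ i ∈ Finset.range (2 ^ ℓ), 0 ≤ x i)
    (hx1 : ∑ i ∈ Finset.range (2 ^ ℓ), x i = 1)
    (p : ℝ) (hp : p ∈ Set.Icc (0 : ℝ) 1)
    (u : ℕ) (hu : u < 2 ^ ℓ) (k : ℕ) (hk : k ∈ omg ℓ u) :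
    schAvg ℓ (mutH ℓ (mutDist ℓ (fun _ => p)) x) u k ≥
      (1 - p) ^ pc u * schAvg ℓ x u k :=
  approximate_schema_theorem_for_mutation_general ℓ x hx0 p hp u hu k hk
end
end
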